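/- For any integer n ≥ 0 and nonzero complex b, d, e, y, w, u, q with all denominators nonzero, the terminating very-well-poised _{10}φ_9 series with parameters bde; q√(bde), -q√(bde), b, d, e, q^{-2-n}/(uw), q^{-2-n}/(uy), q^{-2-n}/(wy), q^{-n} over √(bde), -√(bde), deq, beq, bdq, q^{-1-n}/y, q^{-1-n}/w, q^{-1-n}/u, q^{-3-n}/(uwy), with base q and argument q, equals (bq, dq, eq, bdeq, uwq^3, uyq^3, wyq^3;q)_n / (deq, beq, bdq, yq^2, wq^2, uq^2, ywuq^4;q)_n times the terminating very-well-poised _{10}φ_9 series with parameters ywuq^3; q^2√(ywuq), -q^2√(ywuq), yq, wq, uq, q^{-n}/(de), q^{-n}/(be), q^{-n}/(bd), q^{-n} over q√(ywuq), -q√(ywuq), q^3uw, q^3uy, q^3wy, q^{-n}/b, q^{-n}/d, q^{-n}/e, q^{-n}/(bde), base q, argument q. Equivalently, Σ_{k=0}^n [(1 - bde q^{2k})/(1 - bde)] q^k (b,d,e,bde;q)_k/(deq,beq,bdq,q;q)_k · (q^{-2-n}/uw, q^{-2-n}/uy, q^{-2-n}/wy, q^{-n};q)_k / (q^{-1-n}/y,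 q^{-1-n}/w, q^{-1-n}/u, q^{-3-n}/uwy;q)_k = (bq,dq,eq,bdeq,uwq^3,uyq^3,wyq^3;q)_n / (deq,beq,bdq,yq^2,wq^2,uq^2,ywuq^4;q)_n · Σ_{k=0}^n [(1 - q^{3+2k}uwy)/(1 - q^3 uwy)] q^k (yq,wq,uq,ywuq^3;q)_k/(q^3uw, q^3uy, q^3wy, q;q)_k · (q^{-n}/de, q^{-n}/be, q^{-n}/bd, q^{-n};q)_k / (q^{-n}/b, q^{-n}/d, q^{-n}/e, q^{-n}/bde;q)_k. -/
import Mathlib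

open Finset

/-- The q-shifted factorial `(a;q)_k`. -/
noncomputable def qPoch (a q : ℂ) (k : ℕ) : ℂ := ∏ j ∈ Finset.range k, (1 - a * q ^ j)

lemma qPoch_zero (a q : ℂ) : qPoch a q 0 = 1 := Finset.prod_range_zero _


lemma qPoch_succ (a q : ℂ) (k : ℕ) : qPoch a q (k+1) = qPoch a q k * (1 - a * q ^ k) :=
  Finset.prod_range_succ _ _


lemma qPoch_succ' (a q : ℂ) (k : ℕ) : qPoch a q (k+1) = (1 - a) * qPoch (a*q) q k := by
  rw [qPoch, Finset.prod_range_succ']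
  simp only [pow_zero, mul_one, qPoch]
  rw [mul_comm]
  congr 1
  exact Finset.prod_congr rfl fun j _ => by ring


lemma qPoch_mono_ne {a q : ℂ} {m k : ℕ} (h : m ≤ k) (hk : qPoch a q k ≠ 0) : qPoch a q m ≠ 0 := by
  intro h0
  apply hk
  rw [qPoch, ← Finset.prod_range_mul_prod_Ico _ h, ← qPoch, h0, zero_mul]


/-- Splitting off the top `k` factors of `(α;q)_n`. -/
lemma qPoch_split (α q : ℂ) {k n : ℕ} (h : k ≤ n) :
    qPoch α q n = qPoch α q (n - k) * ∏ i ∈ range k, (1 - α * q ^ (n - 1 - i)) := by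
  induction k with
  | zero => simp
  | succ k ih =>
    have hk : k ≤ n := Nat.le_of_succ_le h
    have h1 : n - k = (n - (k+1)) + 1 := by omega
    rw [ih hk, prod_range_succ, h1, qPoch_succ]
    have h2 : n - 1 - k = n - (k + 1) := by omega
    rw [h2]; ring


/-- Transfer of nonvanishing under the reflection `b*q ↦ 1/(b*q^n)`. -/
lemma qPoch_reflect_ne {b q c : ℂ} (n : ℕ) (hc : c * (b * q ^ n) = 1)
    (h : qPoch c q n ≠ 0) : qPoch (b * q) q n ≠ 0 := by
  rw [qPoch, Finset.prod_ne_zero_iff] at h ⊢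
  intro i hi h0
  rw [mem_range] at hi
  have hbq : b * q * q ^ i = 1 := by
    have := sub_eq_zero.mp h0; linear_combination -this
  apply h (n - 1 - i) (by rw [mem_range]; omega)
  have hqn : (q:ℂ) ^ n = q ^ (n - 1 - i) * (q * q ^ i) := by
    rw [← pow_succ', ← pow_add]; congr 1; omega
  have : c * q ^ (n - 1 - i) = 1 := by
    calc c * q ^ (n - 1 - i) = c * (q ^ (n-1-i) * (b * q * q ^ i)) := by rw [hbq]; ring
    _ = c * (b * q ^ n) := by rw [hqn]; ring
    _ = 1 := hc
  linear_combination -this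


lemma ne4 {a b c d : ℂ} (h : a*b*c*d ≠ 0) : a ≠ 0 ∧ b ≠ 0 ∧ c ≠ 0 ∧ d ≠ 0 := by
  refine ⟨?_, ?_, ?_, ?_⟩ <;> intro h0 <;> apply h <;> rw [h0] <;> ring


/-- triangle Fubini -/
lemma sum_triangle (n : ℕ) (F : ℕ → ℕ → ℂ) :
    ∑ k ∈ range (n+1), ∑ j ∈ range (n+1-k), F k j
      = ∑ j ∈ range (n+1), ∑ k ∈ range (n+1-j), F k j := by
  rw [Finset.sum_sigma', Finset.sum_sigma']
  apply Finset.sum_nbij' (fun p => (⟨p.2, p.1⟩ : (_ : ℕ) × ℕ)) (fun p => ⟨p.2, p.1⟩) <;>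
    simp only [Finset.mem_sigma, Finset.mem_range] <;> intros <;>
      first | omega | rfl | trivial

set_option maxHeartbeats 1000000 in
/-- Lemma A: partial sums of the very-well-poised ₆W₅-type series with argument q. -/
lemma lemA (B D E q : ℂ) (hL : 1 - B*D*E ≠ 0) (m : ℕ)
    (h1 : qPoch (D*E*q) q m ≠ 0) (h2 : qPoch (B*E*q) q m ≠ 0)
    (h3 : qPoch (B*D*q) q m ≠ 0) (h4 : qPoch q q m ≠ 0) :
    ∑ j ∈ range (m+1), (1 - B*D*E*q^(2*j))/(1 - B*D*E) * q^j *
      ((qPoch B q j * qPoch D q j * qPoch E q j * qPoch (B*D*E) q j) /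
        (qPoch (D*E*q) q j * qPoch (B*E*q) q j * qPoch (B*D*q) q j * qPoch q q j))
    = (qPoch (B*D*E*q) q m * qPoch (B*q) q m * qPoch (D*q) q m * qPoch (E*q) q m) /
      (qPoch (D*E*q) q m * qPoch (B*E*q) q m * qPoch (B*D*q) q m * qPoch q q m) := by
  induction m with
  | zero =>
    simp [qPoch_zero, div_self hL]
  | succ m ih =>
    have h1' := qPoch_mono_ne (Nat.le_succ m) h1
    have h2' := qPoch_mono_ne (Nat.le_succ m) h2
    have h3' := qPoch_mono_ne (Nat.le_succ m) h3
    have h4' := qPoch_mono_ne (Nat.le_succ m) h4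
    rw [sum_range_succ, ih h1' h2' h3' h4']
    have e1 := qPoch_succ (D*E*q) q m
    have f1 : (1 - D*E*q*q^m) ≠ 0 := by
      intro h0; apply h1; rw [qPoch_succ, h0, mul_zero]
    have f2 : (1 - B*E*q*q^m) ≠ 0 := by
      intro h0; apply h2; rw [qPoch_succ, h0, mul_zero]
    have f3 : (1 - B*D*q*q^m) ≠ 0 := by
      intro h0; apply h3; rw [qPoch_succ, h0, mul_zero]
    have f4 : (1 - q*q^m) ≠ 0 := by
      intro h0; apply h4; rw [qPoch_succ, h0, mul_zero]
    rw [qPoch_succ' B, qPoch_succ' D, qPoch_succ' E, qPoch_succ' (B*D*E),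
      qPoch_succ (D*E*q), qPoch_succ (B*E*q), qPoch_succ (B*D*q), qPoch_succ q,
      qPoch_succ (B*D*E*q), qPoch_succ (B*q), qPoch_succ (D*q), qPoch_succ (E*q)]
    have hp1 : (q:ℂ)^(m+1) = q^m*q := by ring
    have hp2 : (q:ℂ)^(2*(m+1)) = (q^m)^2*q^2 := by
      rw [pow_mul]; ring
    rw [hp1, hp2]
    clear e1 ih h1 h2 h3 h4 hp1 hp2
    revert h1' h2' h3' h4' f1 f2 f3 f4
    generalize (q:ℂ)^m = t
    generalize qPoch (B*q) q m = a1
    generalize qPoch (D*q) q m = a2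
    generalize qPoch (E*q) q m = a3
    generalize qPoch (B*D*E*q) q m = a4
    generalize qPoch (D*E*q) q m = b1
    generalize qPoch (B*E*q) q m = b2
    generalize qPoch (B*D*q) q m = b3
    generalize qPoch q q m = b4
    intro h1' h2' h3' h4' f1 f2 f3 f4
    rw [div_mul_eq_mul_div, div_mul_div_comm]
    have hQ : (b1 * b2 * b3 * b4) ≠ 0 := by
      exact mul_ne_zero (mul_ne_zero (mul_ne_zero h1' h2') h3') h4'
    have hDEN : (b1 * (1 - D * E * q * t) * (b2 * (1 - B * E * q * t)) * (b3 * (1 - B * D * q * t)) *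
        (b4 * (1 - q * t))) ≠ 0 := by
      exact mul_ne_zero (mul_ne_zero (mul_ne_zero (mul_ne_zero h1' f1) (mul_ne_zero h2' f2))
        (mul_ne_zero h3' f3)) (mul_ne_zero h4' f4)
    have hS : ((1 - B * D * E) *
        (b1 * (1 - D * E * q * t) * (b2 * (1 - B * E * q * t)) * (b3 * (1 - B * D * q * t)) *
          (b4 * (1 - q * t)))) ≠ 0 := mul_ne_zero hL hDEN
    rw [div_add_div _ _ hQ hS, div_eq_div_iff (mul_ne_zero hQ hS) hDEN]
    ring


/-- The key product identity behind Lemma B (`ρ_k`-numerator times tail of `NumQ`). -/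
lemma lemBmul (B D E q : ℂ) (hq : q ≠ 0) (hB : B ≠ 0) (hD : D ≠ 0) (hE : E ≠ 0)
    (n : ℕ) (g1 g2 g3 g4 h1 h2 h3 h4 : ℂ)
    (eg1 : g1 * (D*E) * q^n = 1) (eg2 : g2 * (B*E) * q^n = 1)
    (eg3 : g3 * (B*D) * q^n = 1) (eg4 : g4 * q^n = 1)
    (eh1 : h1 * B * q^n = 1) (eh2 : h2 * D * q^n = 1)
    (eh3 : h3 * E * q^n = 1) (eh4 : h4 * (B*D*E) * q^n = 1) :
    ∀ k, k ≤ n →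
    qPoch g1 q k * qPoch g2 q k * qPoch g3 q k * qPoch g4 q k *
      ∏ i ∈ range k, ((1 - B*D*E*q*q^(n-1-i)) * (1 - B*q*q^(n-1-i)) * (1 - D*q*q^(n-1-i)) *
        (1 - E*q*q^(n-1-i)))
    = qPoch h1 q k * qPoch h2 q k * qPoch h3 q k * qPoch h4 q k *
      ∏ i ∈ range k, ((1 - D*E*q*q^(n-1-i)) * (1 - B*E*q*q^(n-1-i)) * (1 - B*D*q*q^(n-1-i)) *
        (1 - q*q^(n-1-i))) := by
  intro k hk
  induction k with
  | zero => simp [qPoch_zero]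
  | succ k ih =>
    rw [qPoch_succ g1 q k, qPoch_succ g2 q k, qPoch_succ g3 q k, qPoch_succ g4 q k,
      qPoch_succ h1 q k, qPoch_succ h2 q k, qPoch_succ h3 q k, qPoch_succ h4 q k,
      prod_range_succ, prod_range_succ]
    have key : (1 - g1 * q^k) * (1 - g2 * q^k) * (1 - g3 * q^k) * (1 - g4 * q^k) *
        ((1 - B*D*E*q*q^(n-1-k)) * (1 - B*q*q^(n-1-k)) * (1 - D*q*q^(n-1-k)) *
          (1 - E*q*q^(n-1-k)))
        = (1 - h1 * q^k) * (1 - h2 * q^k) * (1 - h3 * q^k) * (1 - h4 * q^k) *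
        ((1 - D*E*q*q^(n-1-k)) * (1 - B*E*q*q^(n-1-k)) * (1 - B*D*q*q^(n-1-k)) *
          (1 - q*q^(n-1-k))) := by
      have hqn : (q:ℂ)^n = q^k * q^(n-1-k) * q := by
        rw [← pow_add, ← pow_succ]; congr 1; omega
      have hqn : (q:ℂ)^n = q^k * q^(n-1-k) * q := by
        rw [← pow_add, ← pow_succ]; congr 1; omega
      have e1 : (1 - g1*q^k) * (D*E*q*q^(n-1-k)) = -(1 - D*E*q*q^(n-1-k)) := by
        linear_combination -eg1 + g1*(D*E)*hqn
      have e2 : (1 - g2*q^k) * (B*E*q*q^(n-1-k)) = -(1 - B*E*q*q^(n-1-k)) := by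
        linear_combination -eg2 + g2*(B*E)*hqn
      have e3 : (1 - g3*q^k) * (B*D*q*q^(n-1-k)) = -(1 - B*D*q*q^(n-1-k)) := by
        linear_combination -eg3 + g3*(B*D)*hqn
      have e4 : (1 - g4*q^k) * (q*q^(n-1-k)) = -(1 - q*q^(n-1-k)) := by
        linear_combination -eg4 + g4*hqn
      have f1 : (1 - h1*q^k) * (B*q*q^(n-1-k)) = -(1 - B*q*q^(n-1-k)) := by
        linear_combination -eh1 + h1*B*hqn
      have f2 : (1 - h2*q^k) * (D*q*q^(n-1-k)) = -(1 - D*q*q^(n-1-k)) := by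
        linear_combination -eh2 + h2*D*hqn
      have f3 : (1 - h3*q^k) * (E*q*q^(n-1-k)) = -(1 - E*q*q^(n-1-k)) := by
        linear_combination -eh3 + h3*E*hqn
      have f4 : (1 - h4*q^k) * (B*D*E*q*q^(n-1-k)) = -(1 - B*D*E*q*q^(n-1-k)) := by
        linear_combination -eh4 + h4*(B*D*E)*hqn
      have hc : (B^2*D^2*E^2*(q*q^(n-1-k))^4 : ℂ) ≠ 0 := by
        apply mul_ne_zero
        apply mul_ne_zero
        apply mul_ne_zero
        · exact pow_ne_zero _ hB
        · exact pow_ne_zero _ hD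
        · exact pow_ne_zero _ hE
        · exact pow_ne_zero _ (mul_ne_zero hq (pow_ne_zero _ hq))
      apply mul_right_cancel₀ hc
      calc (1 - g1 * q^k) * (1 - g2 * q^k) * (1 - g3 * q^k) * (1 - g4 * q^k) *
          ((1 - B*D*E*q*q^(n-1-k)) * (1 - B*q*q^(n-1-k)) * (1 - D*q*q^(n-1-k)) *
            (1 - E*q*q^(n-1-k))) * (B^2*D^2*E^2*(q*q^(n-1-k))^4)
          = ((1 - g1*q^k) * (D*E*q*q^(n-1-k))) * ((1 - g2*q^k) * (B*E*q*q^(n-1-k))) *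
            ((1 - g3*q^k) * (B*D*q*q^(n-1-k))) * ((1 - g4*q^k) * (q*q^(n-1-k))) *
            ((1 - B*D*E*q*q^(n-1-k)) * (1 - B*q*q^(n-1-k)) * (1 - D*q*q^(n-1-k)) *
              (1 - E*q*q^(n-1-k))) := by ring
        _ = (-(1 - D*E*q*q^(n-1-k))) * (-(1 - B*E*q*q^(n-1-k))) * (-(1 - B*D*q*q^(n-1-k))) *
            (-(1 - q*q^(n-1-k))) *
            ((1 - B*D*E*q*q^(n-1-k)) * (1 - B*q*q^(n-1-k)) * (1 - D*q*q^(n-1-k)) *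
              (1 - E*q*q^(n-1-k))) := by rw [e1, e2, e3, e4]
        _ = ((1 - h1*q^k) * (B*q*q^(n-1-k))) * ((1 - h2*q^k) * (D*q*q^(n-1-k))) *
            ((1 - h3*q^k) * (E*q*q^(n-1-k))) * ((1 - h4*q^k) * (B*D*E*q*q^(n-1-k))) *
            ((1 - D*E*q*q^(n-1-k)) * (1 - B*E*q*q^(n-1-k)) * (1 - B*D*q*q^(n-1-k)) *
              (1 - q*q^(n-1-k))) := by rw [f1, f2, f3, f4]; ring
        _ = _ := by ring
    linear_combination ((1 - g1 * q^k) * (1 - g2 * q^k) * (1 - g3 * q^k) * (1 - g4 * q^k) *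
        ((1 - B*D*E*q*q^(n-1-k)) * (1 - B*q*q^(n-1-k)) * (1 - D*q*q^(n-1-k)) *
          (1 - E*q*q^(n-1-k)))) * (ih (by omega)) +
      (qPoch h1 q k * qPoch h2 q k * qPoch h3 q k * qPoch h4 q k *
        ∏ i ∈ range k, ((1 - D*E*q*q^(n-1-i)) * (1 - B*E*q*q^(n-1-i)) * (1 - B*D*q*q^(n-1-i)) *
          (1 - q*q^(n-1-i)))) * key

/-- Lemma B, quotient form. -/
lemma lemB (B D E q : ℂ) (hq : q ≠ 0) (hB : B ≠ 0) (hD : D ≠ 0) (hE : E ≠ 0)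
    (n : ℕ) (g1 g2 g3 g4 h1 h2 h3 h4 : ℂ)
    (eg1 : g1 * (D*E) * q^n = 1) (eg2 : g2 * (B*E) * q^n = 1)
    (eg3 : g3 * (B*D) * q^n = 1) (eg4 : g4 * q^n = 1)
    (eh1 : h1 * B * q^n = 1) (eh2 : h2 * D * q^n = 1)
    (eh3 : h3 * E * q^n = 1) (eh4 : h4 * (B*D*E) * q^n = 1)
    (k : ℕ) (hk : k ≤ n)
    (hH : qPoch h1 q k * qPoch h2 q k * qPoch h3 q k * qPoch h4 q k ≠ 0)
    (hDn : qPoch (D*E*q) q n * qPoch (B*E*q) q n * qPoch (B*D*q) q n * qPoch q q n ≠ 0)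
    (hNn : qPoch (B*D*E*q) q n * qPoch (B*q) q n * qPoch (D*q) q n * qPoch (E*q) q n ≠ 0) :
    (qPoch g1 q k * qPoch g2 q k * qPoch g3 q k * qPoch g4 q k) /
      (qPoch h1 q k * qPoch h2 q k * qPoch h3 q k * qPoch h4 q k)
    = (qPoch (B*D*E*q) q (n-k) * qPoch (B*q) q (n-k) * qPoch (D*q) q (n-k) *
        qPoch (E*q) q (n-k)) /
      (qPoch (D*E*q) q (n-k) * qPoch (B*E*q) q (n-k) * qPoch (B*D*q) q (n-k) *
        qPoch q q (n-k)) *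
      ((qPoch (D*E*q) q n * qPoch (B*E*q) q n * qPoch (B*D*q) q n * qPoch q q n) /
       (qPoch (B*D*E*q) q n * qPoch (B*q) q n * qPoch (D*q) q n * qPoch (E*q) q n)) := by
  obtain ⟨hd1, hd2, hd3, hd4⟩ := ne4 hDn
  have hDk : qPoch (D*E*q) q (n-k) * qPoch (B*E*q) q (n-k) * qPoch (B*D*q) q (n-k) *
      qPoch q q (n-k) ≠ 0 := by
    have h' : n - k ≤ n := Nat.sub_le n k
    exact mul_ne_zero (mul_ne_zero (mul_ne_zero (qPoch_mono_ne h' hd1) (qPoch_mono_ne h' hd2))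
      (qPoch_mono_ne h' hd3)) (qPoch_mono_ne h' hd4)
  have hbm := lemBmul B D E q hq hB hD hE n g1 g2 g3 g4 h1 h2 h3 h4
    eg1 eg2 eg3 eg4 eh1 eh2 eh3 eh4 k hk
  rw [Finset.prod_mul_distrib, Finset.prod_mul_distrib, Finset.prod_mul_distrib,
    Finset.prod_mul_distrib, Finset.prod_mul_distrib, Finset.prod_mul_distrib] at hbm
  rw [div_mul_div_comm, div_eq_div_iff hH (mul_ne_zero hDk hNn)]
  rw [qPoch_split (B*D*E*q) q hk, qPoch_split (B*q) q hk, qPoch_split (D*q) q hk,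
    qPoch_split (E*q) q hk, qPoch_split (D*E*q) q hk, qPoch_split (B*E*q) q hk,
    qPoch_split (B*D*q) q hk, qPoch_split q q hk]
  linear_combination (qPoch (B*D*E*q) q (n-k) * qPoch (B*q) q (n-k) * qPoch (D*q) q (n-k) *
    qPoch (E*q) q (n-k) * (qPoch (D*E*q) q (n-k) * qPoch (B*E*q) q (n-k) *
    qPoch (B*D*q) q (n-k) * qPoch q q (n-k))) * hbm


/-- Lemma B, reversed quotient form. -/
lemma lemB' (B D E q : ℂ) (hq : q ≠ 0) (hB : B ≠ 0) (hD : D ≠ 0) (hE : E ≠ 0)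
    (n : ℕ) (g1 g2 g3 g4 h1 h2 h3 h4 : ℂ)
    (eg1 : g1 * (D*E) * q^n = 1) (eg2 : g2 * (B*E) * q^n = 1)
    (eg3 : g3 * (B*D) * q^n = 1) (eg4 : g4 * q^n = 1)
    (eh1 : h1 * B * q^n = 1) (eh2 : h2 * D * q^n = 1)
    (eh3 : h3 * E * q^n = 1) (eh4 : h4 * (B*D*E) * q^n = 1)
    (k : ℕ) (hk : k ≤ n)
    (hH : qPoch h1 q k * qPoch h2 q k * qPoch h3 q k * qPoch h4 q k ≠ 0)
    (hDn : qPoch (D*E*q) q n * qPoch (B*E*q) q n * qPoch (B*D*q) q n * qPoch q q n ≠ 0)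
    (hNn : qPoch (B*D*E*q) q n * qPoch (B*q) q n * qPoch (D*q) q n * qPoch (E*q) q n ≠ 0) :
    (qPoch (B*D*E*q) q (n-k) * qPoch (B*q) q (n-k) * qPoch (D*q) q (n-k) *
        qPoch (E*q) q (n-k)) /
      (qPoch (D*E*q) q (n-k) * qPoch (B*E*q) q (n-k) * qPoch (B*D*q) q (n-k) *
        qPoch q q (n-k))
    = (qPoch g1 q k * qPoch g2 q k * qPoch g3 q k * qPoch g4 q k) /
        (qPoch h1 q k * qPoch h2 q k * qPoch h3 q k * qPoch h4 q k) *
      ((qPoch (B*D*E*q) q n * qPoch (B*q) q n * qPoch (D*q) q n * qPoch (E*q) q n) /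
       (qPoch (D*E*q) q n * qPoch (B*E*q) q n * qPoch (B*D*q) q n * qPoch q q n)) := by
  rw [lemB B D E q hq hB hD hE n g1 g2 g3 g4 h1 h2 h3 h4 eg1 eg2 eg3 eg4 eh1 eh2 eh3 eh4
    k hk hH hDn hNn]
  have h1' : (qPoch (D*E*q) q n * qPoch (B*E*q) q n * qPoch (B*D*q) q n * qPoch q q n) /
      (qPoch (B*D*E*q) q n * qPoch (B*q) q n * qPoch (D*q) q n * qPoch (E*q) q n) *
      ((qPoch (B*D*E*q) q n * qPoch (B*q) q n * qPoch (D*q) q n * qPoch (E*q) q n) /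
       (qPoch (D*E*q) q n * qPoch (B*E*q) q n * qPoch (B*D*q) q n * qPoch q q n)) = 1 := by
    rw [div_mul_div_comm, div_eq_one_iff_eq (mul_ne_zero hNn hDn)]
    ring
  linear_combination (-((qPoch (B*D*E*q) q (n-k) * qPoch (B*q) q (n-k) * qPoch (D*q) q (n-k) *
    qPoch (E*q) q (n-k)) / (qPoch (D*E*q) q (n-k) * qPoch (B*E*q) q (n-k) *
    qPoch (B*D*q) q (n-k) * qPoch q q (n-k)))) * h1'

set_option maxHeartbeats 2000000 in
/-- Gasper's transformation of two terminating `₁₀φ₉` series (Gasper 1989, Eq. (2.11)). -/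
theorem gasper_10phi9_transformation (b d e y w u q : ℂ) (n : ℕ)
    (hb : b ≠ 0) (hd : d ≠ 0) (he : e ≠ 0) (hy : y ≠ 0) (hw : w ≠ 0) (hu : u ≠ 0) (hq : q ≠ 0)
    (hbde : 1 - b * d * e ≠ 0) (huwy : 1 - q ^ 3 * u * w * y ≠ 0)
    (hden1 : ∀ k ≤ n, qPoch (d * e * q) q k * qPoch (b * e * q) q k * qPoch (b * d * q) q k *
      qPoch q q k ≠ 0)
    (hden2 : ∀ k ≤ n, qPoch (q ^ (-(1 : ℤ) - n) / y) q k * qPoch (q ^ (-(1 : ℤ) - n) / w) q k *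
      qPoch (q ^ (-(1 : ℤ) - n) / u) q k * qPoch (q ^ (-(3 : ℤ) - n) / (u * w * y)) q k ≠ 0)
    (hden3 : ∀ k ≤ n, qPoch (q ^ 3 * u * w) q k * qPoch (q ^ 3 * u * y) q k *
      qPoch (q ^ 3 * w * y) q k ≠ 0)
    (hden4 : ∀ k ≤ n, qPoch (q ^ (-(n : ℤ)) / b) q k * qPoch (q ^ (-(n : ℤ)) / d) q k *
      qPoch (q ^ (-(n : ℤ)) / e) q k * qPoch (q ^ (-(n : ℤ)) / (b * d * e)) q k ≠ 0)
    (hden5 : qPoch (d * e * q) q n * qPoch (b * e * q) q n * qPoch (b * d * q) q n *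
      qPoch (y * q ^ 2) q n * qPoch (w * q ^ 2) q n * qPoch (u * q ^ 2) q n *
      qPoch (y * w * u * q ^ 4) q n ≠ 0) :
    ∑ k ∈ Finset.range (n + 1),
        (1 - b * d * e * q ^ (2 * k)) / (1 - b * d * e) * q ^ k *
          ((qPoch b q k * qPoch d q k * qPoch e q k * qPoch (b * d * e) q k) /
            (qPoch (d * e * q) q k * qPoch (b * e * q) q k * qPoch (b * d * q) q k *
              qPoch q q k)) *
          ((qPoch (q ^ (-(2 : ℤ) - n) / (u * w)) q k * qPoch (q ^ (-(2 : ℤ) - n) / (u * y)) q k *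
              qPoch (q ^ (-(2 : ℤ) - n) / (w * y)) q k * qPoch (q ^ (-(n : ℤ))) q k) /
            (qPoch (q ^ (-(1 : ℤ) - n) / y) q k * qPoch (q ^ (-(1 : ℤ) - n) / w) q k *
              qPoch (q ^ (-(1 : ℤ) - n) / u) q k * qPoch (q ^ (-(3 : ℤ) - n) / (u * w * y)) q k)) =
      (qPoch (b * q) q n * qPoch (d * q) q n * qPoch (e * q) q n * qPoch (b * d * e * q) q n *
          qPoch (u * w * q ^ 3) q n * qPoch (u * y * q ^ 3) q n * qPoch (w * y * q ^ 3) q n) /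
        (qPoch (d * e * q) q n * qPoch (b * e * q) q n * qPoch (b * d * q) q n *
          qPoch (y * q ^ 2) q n * qPoch (w * q ^ 2) q n * qPoch (u * q ^ 2) q n *
          qPoch (y * w * u * q ^ 4) q n) *
        ∑ k ∈ Finset.range (n + 1),
          (1 - q ^ (3 + 2 * k) * u * w * y) / (1 - q ^ 3 * u * w * y) * q ^ k *
            ((qPoch (y * q) q k * qPoch (w * q) q k * qPoch (u * q) q k *
                qPoch (y * w * u * q ^ 3) q k) /
              (qPoch (q ^ 3 * u * w) q k * qPoch (q ^ 3 * u * y) q k *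
                qPoch (q ^ 3 * w * y) q k * qPoch q q k)) *
            ((qPoch (q ^ (-(n : ℤ)) / (d * e)) q k * qPoch (q ^ (-(n : ℤ)) / (b * e)) q k *
                qPoch (q ^ (-(n : ℤ)) / (b * d)) q k * qPoch (q ^ (-(n : ℤ))) q k) /
              (qPoch (q ^ (-(n : ℤ)) / b) q k * qPoch (q ^ (-(n : ℤ)) / d) q k *
                qPoch (q ^ (-(n : ℤ)) / e) q k * qPoch (q ^ (-(n : ℤ)) / (b * d * e)) q k)) := by
  -- raw argument normalizations (y-side)
  have hr_n4 : y*q*(w*q)*(u*q)*q = y*w*u*q^4 := by ring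
  have hr_bq : y*q*q = y*q^2 := by ring
  have hr_dq : w*q*q = w*q^2 := by ring
  have hr_eq : u*q*q = u*q^2 := by ring
  have hr_de : w*q*(u*q)*q = q^3*u*w := by ring
  have hr_be : y*q*(u*q)*q = q^3*u*y := by ring
  have hr_bd : y*q*(w*q)*q = q^3*w*y := by ring
  have hr_l : y*q*(w*q)*(u*q) = y*w*u*q^3 := by ring
  -- zpow to inverse-pow conversions
  have hz0 : (q:ℂ) ^ (-(n : ℤ)) = (q^n)⁻¹ := by
    rw [zpow_neg, zpow_natCast]
  have hz1 : (q:ℂ) ^ (-(1 : ℤ) - (n:ℤ)) = (q^(n+1))⁻¹ := by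
    rw [show -(1 : ℤ) - (n:ℤ) = -((n+1 : ℕ) : ℤ) by push_cast; ring, zpow_neg, zpow_natCast]
  have hz2 : (q:ℂ) ^ (-(2 : ℤ) - (n:ℤ)) = (q^(n+2))⁻¹ := by
    rw [show -(2 : ℤ) - (n:ℤ) = -((n+2 : ℕ) : ℤ) by push_cast; ring, zpow_neg, zpow_natCast]
  have hz3 : (q:ℂ) ^ (-(3 : ℤ) - (n:ℤ)) = (q^(n+3))⁻¹ := by
    rw [show -(3 : ℤ) - (n:ℤ) = -((n+3 : ℕ) : ℤ) by push_cast; ring, zpow_neg, zpow_natCast]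
  have hqn : (q:ℂ)^n ≠ 0 := pow_ne_zero n hq
  have hqn1 : (q:ℂ)^(n+1) ≠ 0 := pow_ne_zero _ hq
  have hqn2 : (q:ℂ)^(n+2) ≠ 0 := pow_ne_zero _ hq
  have hqn3 : (q:ℂ)^(n+3) ≠ 0 := pow_ne_zero _ hq
  -- balanced-pair equations for lemB (y-side)
  have egy1 : q ^ (-(2 : ℤ) - (n:ℤ)) / (u * w) * (w*q*(u*q)) * q^n = 1 := by
    rw [hz2]; field_simp; ring
  have egy2 : q ^ (-(2 : ℤ) - (n:ℤ)) / (u * y) * (y*q*(u*q)) * q^n = 1 := by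
    rw [hz2]; field_simp; ring
  have egy3 : q ^ (-(2 : ℤ) - (n:ℤ)) / (w * y) * (y*q*(w*q)) * q^n = 1 := by
    rw [hz2]; field_simp; ring
  have egy4 : q ^ (-(n : ℤ)) * q^n = 1 := by
    rw [hz0]; exact inv_mul_cancel₀ hqn
  have ehy1 : q ^ (-(1 : ℤ) - (n:ℤ)) / y * (y*q) * q^n = 1 := by
    rw [hz1]; field_simp; ring
  have ehy2 : q ^ (-(1 : ℤ) - (n:ℤ)) / w * (w*q) * q^n = 1 := by
    rw [hz1]; field_simp; ring
  have ehy3 : q ^ (-(1 : ℤ) - (n:ℤ)) / u * (u*q) * q^n = 1 := by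
    rw [hz1]; field_simp; ring
  have ehy4 : q ^ (-(3 : ℤ) - (n:ℤ)) / (u * w * y) * (y*q*(w*q)*(u*q)) * q^n = 1 := by
    rw [hz3]; field_simp; ring
  -- balanced-pair equations for lemB' (x-side)
  have egx1 : q ^ (-(n : ℤ)) / (d * e) * (d*e) * q^n = 1 := by
    rw [hz0]; field_simp; try ring
  have egx2 : q ^ (-(n : ℤ)) / (b * e) * (b*e) * q^n = 1 := by
    rw [hz0]; field_simp; try ring
  have egx3 : q ^ (-(n : ℤ)) / (b * d) * (b*d) * q^n = 1 := by
    rw [hz0]; field_simp; try ring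
  have ehx1 : q ^ (-(n : ℤ)) / b * b * q^n = 1 := by
    rw [hz0]; field_simp; try ring
  have ehx2 : q ^ (-(n : ℤ)) / d * d * q^n = 1 := by
    rw [hz0]; field_simp; try ring
  have ehx3 : q ^ (-(n : ℤ)) / e * e * q^n = 1 := by
    rw [hz0]; field_simp; try ring
  have ehx4 : q ^ (-(n : ℤ)) / (b * d * e) * (b*d*e) * q^n = 1 := by
    rw [hz0]; field_simp; try ring
  -- nonzero extractions
  have hden1n := hden1 n le_rfl
  rw [mul_ne_zero_iff, mul_ne_zero_iff, mul_ne_zero_iff] at hden1n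
  obtain ⟨⟨⟨hx1, hx2⟩, hx3⟩, hx4⟩ := hden1n
  have hden3n := hden3 n le_rfl
  rw [mul_ne_zero_iff, mul_ne_zero_iff] at hden3n
  obtain ⟨⟨h3a, h3b⟩, h3c⟩ := hden3n
  have hden5' := hden5
  rw [mul_ne_zero_iff, mul_ne_zero_iff, mul_ne_zero_iff, mul_ne_zero_iff, mul_ne_zero_iff,
    mul_ne_zero_iff] at hden5'
  obtain ⟨⟨⟨⟨⟨⟨h5a, h5b⟩, h5c⟩, h5d⟩, h5e⟩, h5f⟩, h5g⟩ := hden5'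
  have hden4n := hden4 n le_rfl
  rw [mul_ne_zero_iff, mul_ne_zero_iff, mul_ne_zero_iff] at hden4n
  obtain ⟨⟨⟨h4a, h4b⟩, h4c⟩, h4d⟩ := hden4n
  -- reflected nonvanishing: numerator of Q_x at n
  have hNxb : qPoch (b*q) q n ≠ 0 := qPoch_reflect_ne n (by rw [hz0]; field_simp; try ring) h4a
  have hNxd : qPoch (d*q) q n ≠ 0 := qPoch_reflect_ne n (by rw [hz0]; field_simp; try ring) h4b
  have hNxe : qPoch (e*q) q n ≠ 0 := qPoch_reflect_ne n (by rw [hz0]; field_simp; try ring) h4c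
  have hNxa : qPoch (b*d*e*q) q n ≠ 0 := qPoch_reflect_ne n (c := q ^ (-(n : ℤ)) / (b*d*e))
    (by rw [hz0]; field_simp; try ring) h4d
  have hNX : qPoch (b*d*e*q) q (n) * qPoch (b*q) q (n) * qPoch (d*q) q (n) * qPoch (e*q) q (n) ≠ 0 :=
    mul_ne_zero (mul_ne_zero (mul_ne_zero hNxa hNxb) hNxd) hNxe
  have hDX : qPoch (d*e*q) q (n) * qPoch (b*e*q) q (n) * qPoch (b*d*q) q (n) * qPoch q q (n) ≠ 0 :=
    mul_ne_zero (mul_ne_zero (mul_ne_zero hx1 hx2) hx3) hx4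
  -- instance-spelled nonzeros for the y-side
  have hNY : qPoch (y*q*(w*q)*(u*q)*q) q n * qPoch (y*q*q) q n * qPoch (w*q*q) q n *
      qPoch (u*q*q) q n ≠ 0 := by
    rw [hr_n4, hr_bq, hr_dq, hr_eq]
    exact mul_ne_zero (mul_ne_zero (mul_ne_zero h5g h5d) h5e) h5f
  have hDY : qPoch (w*q*(u*q)*q) q n * qPoch (y*q*(u*q)*q) q n * qPoch (y*q*(w*q)*q) q n *
      qPoch q q n ≠ 0 := by
    rw [hr_de, hr_be, hr_bd]
    exact mul_ne_zero (mul_ne_zero (mul_ne_zero h3a h3b) h3c) hx4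
  have hNY' : qPoch (y*w*u*q^4) q (n) * qPoch (y*q^2) q (n) * qPoch (w*q^2) q (n) * qPoch (u*q^2) q (n) ≠ 0 :=
    mul_ne_zero (mul_ne_zero (mul_ne_zero h5g h5d) h5e) h5f
  have huwy' : (1:ℂ) - y*w*u*q^3 ≠ 0 := fun h0 => huwy (by linear_combination h0)
  have hLy : (1:ℂ) - y*q*(w*q)*(u*q) ≠ 0 := by rw [hr_l]; exact huwy'
  have hyq : y*q ≠ 0 := mul_ne_zero hy hq
  have hwq : w*q ≠ 0 := mul_ne_zero hw hq
  have huq : u*q ≠ 0 := mul_ne_zero hu hq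
  -- the chain of transformations
  trans ∑ k ∈ Finset.range (n + 1), (1 - b * d * e * q ^ (2 * k)) / (1 - b * d * e) * q ^ k * (qPoch b q k * qPoch d q k * qPoch e q k * qPoch (b * d * e) q k / (qPoch (d * e * q) q k * qPoch (b * e * q) q k * qPoch (b * d * q) q k * qPoch q q k)) *
      ((qPoch (y*w*u*q^4) q (n - k) * qPoch (y*q^2) q (n - k) * qPoch (w*q^2) q (n - k) * qPoch (u*q^2) q (n - k)) / (qPoch (q^3*u*w) q (n - k) * qPoch (q^3*u*y) q (n - k) * qPoch (q^3*w*y) q (n - k) * qPoch q q (n - k)) * ((qPoch (q^3*u*w) q (n) * qPoch (q^3*u*y) q (n) * qPoch (q^3*w*y) q (n) * qPoch q q (n)) / (qPoch (y*w*u*q^4) q (n) * qPoch (y*q^2) q (n) * qPoch (w*q^2) q (n) * qPoch (u*q^2) q (n))))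
  · refine Finset.sum_congr rfl fun k hk => ?_
    have hk' : k ≤ n := by rw [Finset.mem_range] at hk; omega
    have hBy := lemB (y*q) (w*q) (u*q) q hq hyq hwq huq n _ _ _ _ _ _ _ _
      egy1 egy2 egy3 egy4 ehy1 ehy2 ehy3 ehy4 k hk' (hden2 k hk') hDY hNY
    rw [hr_n4, hr_bq, hr_dq, hr_eq, hr_de, hr_be, hr_bd] at hBy
    rw [hBy]
  trans ((qPoch (q^3*u*w) q (n) * qPoch (q^3*u*y) q (n) * qPoch (q^3*w*y) q (n) * qPoch q q (n)) / (qPoch (y*w*u*q^4) q (n) * qPoch (y*q^2) q (n) * qPoch (w*q^2) q (n) * qPoch (u*q^2) q (n))) * ∑ k ∈ Finset.range (n + 1), (1 - b * d * e * q ^ (2 * k)) / (1 - b * d * e) * q ^ k * (qPoch b q k * qPoch d q k * qPoch e q k * qPoch (b * d * e) q k / (qPoch (d * e * q) q k * qPoch (b * e * q) q k * qPoch (b * d * q) q k * qPoch q q k)) * ((qPoch (y*w*u*q^4) q (n - k) * qPoch (y*q^2) q (n - k) * qPoch (w*q^2) q (n - k) * qPoch (u*q^2) q (n - k)) / (qPoch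 (q^3*u*w) q (n - k) * qPoch (q^3*u*y) q (n - k) * qPoch (q^3*w*y) q (n - k) * qPoch q q (n - k)))
  · rw [Finset.mul_sum]
    exact Finset.sum_congr rfl fun k hk => by ring
  trans ((qPoch (q^3*u*w) q (n) * qPoch (q^3*u*y) q (n) * qPoch (q^3*w*y) q (n) * qPoch q q (n)) / (qPoch (y*w*u*q^4) q (n) * qPoch (y*q^2) q (n) * qPoch (w*q^2) q (n) * qPoch (u*q^2) q (n))) * ∑ k ∈ Finset.range (n + 1), (1 - b * d * e * q ^ (2 * k)) / (1 - b * d * e) * q ^ k * (qPoch b q k * qPoch d q k * qPoch e q k * qPoch (b * d * e) q k / (qPoch (d * e * q) q k * qPoch (b * e * q) q k * qPoch (b * d * q) q k * qPoch q q k)) *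
      ∑ j ∈ Finset.range (n + 1 - k), (1 - y*w*u*q^3 * q ^ (2 * j)) / (1 - y*w*u*q^3) * q ^ j * (qPoch (y*q) q j * qPoch (w*q) q j * qPoch (u*q) q j * qPoch (y*w*u*q^3) q j / (qPoch (q^3*u*w) q j * qPoch (q^3*u*y) q j * qPoch (q^3*w*y) q j * qPoch q q j))
  · congr 1
    refine Finset.sum_congr rfl fun k hk => ?_
    have hk' : k ≤ n := by rw [Finset.mem_range] at hk; omega
    have hAy := lemA (y*q) (w*q) (u*q) q hLy (n - k)
      (by rw [hr_de]; exact qPoch_mono_ne (Nat.sub_le n k) h3a)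
      (by rw [hr_be]; exact qPoch_mono_ne (Nat.sub_le n k) h3b)
      (by rw [hr_bd]; exact qPoch_mono_ne (Nat.sub_le n k) h3c)
      (qPoch_mono_ne (Nat.sub_le n k) hx4)
    rw [hr_n4, hr_bq, hr_dq, hr_eq, hr_de, hr_be, hr_bd, hr_l] at hAy
    rw [show n - k + 1 = n + 1 - k by omega] at hAy
    rw [← hAy]
  trans ((qPoch (q^3*u*w) q (n) * qPoch (q^3*u*y) q (n) * qPoch (q^3*w*y) q (n) * qPoch q q (n)) / (qPoch (y*w*u*q^4) q (n) * qPoch (y*q^2) q (n) * qPoch (w*q^2) q (n) * qPoch (u*q^2) q (n))) * ∑ k ∈ Finset.range (n + 1), ∑ j ∈ Finset.range (n + 1 - k),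
      ((1 - b * d * e * q ^ (2 * k)) / (1 - b * d * e) * q ^ k * (qPoch b q k * qPoch d q k * qPoch e q k * qPoch (b * d * e) q k / (qPoch (d * e * q) q k * qPoch (b * e * q) q k * qPoch (b * d * q) q k * qPoch q q k))) * ((1 - y*w*u*q^3 * q ^ (2 * j)) / (1 - y*w*u*q^3) * q ^ j * (qPoch (y*q) q j * qPoch (w*q) q j * qPoch (u*q) q j * qPoch (y*w*u*q^3) q j / (qPoch (q^3*u*w) q j * qPoch (q^3*u*y) q j * qPoch (q^3*w*y) q j * qPoch q q j)))
  · congr 1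
    exact Finset.sum_congr rfl fun k hk => by rw [Finset.mul_sum]
  trans ((qPoch (q^3*u*w) q (n) * qPoch (q^3*u*y) q (n) * qPoch (q^3*w*y) q (n) * qPoch q q (n)) / (qPoch (y*w*u*q^4) q (n) * qPoch (y*q^2) q (n) * qPoch (w*q^2) q (n) * qPoch (u*q^2) q (n))) * ∑ j ∈ Finset.range (n + 1), ∑ k ∈ Finset.range (n + 1 - j),
      ((1 - b * d * e * q ^ (2 * k)) / (1 - b * d * e) * q ^ k * (qPoch b q k * qPoch d q k * qPoch e q k * qPoch (b * d * e) q k / (qPoch (d * e * q) q k * qPoch (b * e * q) q k * qPoch (b * d * q) q k * qPoch q q k))) * ((1 - y*w*u*q^3 * q ^ (2 * j)) / (1 - y*w*u*q^3) * q ^ j * (qPoch (y*q) q j * qPoch (w*q) q j * qPoch (u*q) q j * qPoch (y*w*u*q^3) q j / (qPoch (q^3*u*w) q j * qPoch (q^3*u*y) q j * qPoch (q^3*w*y) q j * qPoch q q j)))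
  · congr 1
    exact sum_triangle n (fun k j => ((1 - b * d * e * q ^ (2 * k)) / (1 - b * d * e) * q ^ k * (qPoch b q k * qPoch d q k * qPoch e q k * qPoch (b * d * e) q k / (qPoch (d * e * q) q k * qPoch (b * e * q) q k * qPoch (b * d * q) q k * qPoch q q k))) * ((1 - y*w*u*q^3 * q ^ (2 * j)) / (1 - y*w*u*q^3) * q ^ j * (qPoch (y*q) q j * qPoch (w*q) q j * qPoch (u*q) q j * qPoch (y*w*u*q^3) q j / (qPoch (q^3*u*w) q j * qPoch (q^3*u*y) q j * qPoch (q^3*w*y) q j * qPoch q q j))))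
  trans ((qPoch (q^3*u*w) q (n) * qPoch (q^3*u*y) q (n) * qPoch (q^3*w*y) q (n) * qPoch q q (n)) / (qPoch (y*w*u*q^4) q (n) * qPoch (y*q^2) q (n) * qPoch (w*q^2) q (n) * qPoch (u*q^2) q (n))) * ∑ j ∈ Finset.range (n + 1), (∑ k ∈ Finset.range (n + 1 - j), (1 - b * d * e * q ^ (2 * k)) / (1 - b * d * e) * q ^ k * (qPoch b q k * qPoch d q k * qPoch e q k * qPoch (b * d * e) q k / (qPoch (d * e * q) q k * qPoch (b * e * q) q k * qPoch (b * d * q) q k * qPoch q q k))) *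
      ((1 - y*w*u*q^3 * q ^ (2 * j)) / (1 - y*w*u*q^3) * q ^ j * (qPoch (y*q) q j * qPoch (w*q) q j * qPoch (u*q) q j * qPoch (y*w*u*q^3) q j / (qPoch (q^3*u*w) q j * qPoch (q^3*u*y) q j * qPoch (q^3*w*y) q j * qPoch q q j)))
  · congr 1
    exact Finset.sum_congr rfl fun j hj => by rw [Finset.sum_mul]
  trans ((qPoch (q^3*u*w) q (n) * qPoch (q^3*u*y) q (n) * qPoch (q^3*w*y) q (n) * qPoch q q (n)) / (qPoch (y*w*u*q^4) q (n) * qPoch (y*q^2) q (n) * qPoch (w*q^2) q (n) * qPoch (u*q^2) q (n))) * ∑ j ∈ Finset.range (n + 1), ((qPoch (b*d*e*q) q (n - j) * qPoch (b*q) q (n - j) * qPoch (d*q) q (n - j) * qPoch (e*q) q (n - j)) / (qPoch (d*e*q) q (n - j) * qPoch (b*e*q) q (n - j) * qPoch (b*d*q) q (n - j) * qPoch q q (n - j))) * ((1 - y*w*u*q^3 * q ^ (2 * j)) / (1 - y*w*u*q^3) * q ^ j * (qPoch (y*q) q j * qPoch (w*q) q j * qPoch (u*q) q j * qPoch (y*w*u*q^3)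 q j / (qPoch (q^3*u*w) q j * qPoch (q^3*u*y) q j * qPoch (q^3*w*y) q j * qPoch q q j)))
  · congr 1
    refine Finset.sum_congr rfl fun j hj => ?_
    have hj' : j ≤ n := by rw [Finset.mem_range] at hj; omega
    have hAx := lemA b d e q hbde (n - j)
      (qPoch_mono_ne (Nat.sub_le n j) hx1) (qPoch_mono_ne (Nat.sub_le n j) hx2)
      (qPoch_mono_ne (Nat.sub_le n j) hx3) (qPoch_mono_ne (Nat.sub_le n j) hx4)
    rw [show n - j + 1 = n + 1 - j by omega] at hAx
    rw [hAx]
  trans ((qPoch (q^3*u*w) q (n) * qPoch (q^3*u*y) q (n) * qPoch (q^3*w*y) q (n) * qPoch q q (n)) / (qPoch (y*w*u*q^4) q (n) * qPoch (y*q^2) q (n) * qPoch (w*q^2) q (n) * qPoch (u*q^2) q (n))) * ∑ j ∈ Finset.range (n + 1), (((qPoch (q ^ (-(n : ℤ)) / (d * e)) q j * qPoch (q ^ (-(n : ℤ)) / (b * e)) q j * qPoch (q ^ (-(n : ℤ)) / (b * d)) q j * qPoch (q ^ (-(n : ℤ))) q j) / (qPoch (q ^ (-(n : ℤ)) / b)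 q j * qPoch (q ^ (-(n : ℤ)) / d) q j * qPoch (q ^ (-(n : ℤ)) / e) q j * qPoch (q ^ (-(n : ℤ)) / (b * d * e)) q j)) * ((qPoch (b*d*e*q) q (n) * qPoch (b*q) q (n) * qPoch (d*q) q (n) * qPoch (e*q) q (n)) / (qPoch (d*e*q) q (n) * qPoch (b*e*q) q (n) * qPoch (b*d*q) q (n) * qPoch q q (n)))) *
      ((1 - y*w*u*q^3 * q ^ (2 * j)) / (1 - y*w*u*q^3) * q ^ j * (qPoch (y*q) q j * qPoch (w*q) q j * qPoch (u*q) q j * qPoch (y*w*u*q^3) q j / (qPoch (q^3*u*w) q j * qPoch (q^3*u*y) q j * qPoch (q^3*w*y) q j * qPoch q q j)))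
  · congr 1
    refine Finset.sum_congr rfl fun j hj => ?_
    have hj' : j ≤ n := by rw [Finset.mem_range] at hj; omega
    have hBx := lemB' b d e q hq hb hd he n _ _ _ _ _ _ _ _
      egx1 egx2 egx3 egy4 ehx1 ehx2 ehx3 ehx4 j hj' (hden4 j hj') hDX hNX
    rw [hBx]
  trans (((qPoch (q^3*u*w) q (n) * qPoch (q^3*u*y) q (n) * qPoch (q^3*w*y) q (n) * qPoch q q (n)) / (qPoch (y*w*u*q^4) q (n) * qPoch (y*q^2) q (n) * qPoch (w*q^2) q (n) * qPoch (u*q^2) q (n))) * ((qPoch (b*d*e*q) q (n) * qPoch (b*q) q (n) * qPoch (d*q) q (n) * qPoch (e*q) q (n)) / (qPoch (d*e*q) q (n) * qPoch (b*e*q) q (n) * qPoch (b*d*q) q (n) * qPoch q q (n)))) * ∑ j ∈ Finset.range (n + 1),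
      ((1 - y*w*u*q^3 * q ^ (2 * j)) / (1 - y*w*u*q^3) * q ^ j * (qPoch (y*q) q j * qPoch (w*q) q j * qPoch (u*q) q j * qPoch (y*w*u*q^3) q j / (qPoch (q^3*u*w) q j * qPoch (q^3*u*y) q j * qPoch (q^3*w*y) q j * qPoch q q j))) * ((qPoch (q ^ (-(n : ℤ)) / (d * e)) q j * qPoch (q ^ (-(n : ℤ)) / (b * e)) q j * qPoch (q ^ (-(n : ℤ)) / (b * d)) q j * qPoch (q ^ (-(n : ℤ))) q j) / (qPoch (q ^ (-(n : ℤ)) / b) q j * qPoch (q ^ (-(n : ℤ)) / d) q j * qPoch (q ^ (-(n : ℤ)) / e) q j * qPoch (q ^ (-(n : ℤ)) / (b * d * e)) q j))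
  · rw [Finset.mul_sum, Finset.mul_sum]
    exact Finset.sum_congr rfl fun j hj => by ring
  have hK : ((qPoch (q^3*u*w) q (n) * qPoch (q^3*u*y) q (n) * qPoch (q^3*w*y) q (n) * qPoch q q (n)) / (qPoch (y*w*u*q^4) q (n) * qPoch (y*q^2) q (n) * qPoch (w*q^2) q (n) * qPoch (u*q^2) q (n))) * ((qPoch (b*d*e*q) q (n) * qPoch (b*q) q (n) * qPoch (d*q) q (n) * qPoch (e*q) q (n)) / (qPoch (d*e*q) q (n) * qPoch (b*e*q) q (n) * qPoch (b*d*q) q (n) * qPoch q q (n))) = (qPoch (b * q) q n * qPoch (d * q) q n * qPoch (e * q) q n * qPoch (b * d * e * q) q n * qPoch (u * w * q ^ 3) q n * qPoch (u * y * q ^ 3) q n * qPoch (w * y * q ^ 3) q n) / (qPoch (d * e * q) q n * qPoch (b * e * q) q n * qPoch (b * d * q) q n * qPoch (y * q ^ 2) q n * qPoch (w * q ^ 2) q n * qPoch (u * q ^ 2) q n * qPoch (y * w * u * q ^ 4) q n) := by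
    rw [show u * w * q ^ 3 = q^3*u*w from by ring, show u * y * q ^ 3 = q^3*u*y from by ring,
      show w * y * q ^ 3 = q^3*w*y from by ring]
    rw [div_mul_div_comm, div_eq_div_iff (mul_ne_zero hNY' hDX) hden5]
    ring
  rw [hK]
  congr 1
  exact Finset.sum_congr rfl fun j hj => by ring
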